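/- Define g(a) = a + e^{λa}/λ − 1/λ − (u/μ)·e^{(λ − λ₁)a}·(λ₁/λ) for a ≥ 0, where λ, λ₁, u, μ > 0. If λ·u/(2μ) < 1, then g'(a) ≥ 1 > 0 for all a ≥ 0, so g(a) = 0 has a unique solution in (0, ∞). -/
import Mathlib


open Real

/-- For `g(a) = a + e^{la}/l - 1/l - (u/m)·e^{(l-l₁)a}·(l₁/l)` with `l, l₁, u, m > 0` and
`l·u/(2m) < 1`, the derivative of `g` is at least `1` on `[0,∞)` and `g(a) = 0` has a unique
solution in `(0,∞)`. -/
theorem fpa_unique_root_of_small_scale (l l1 u m : ℝ) (hl : 0 < l) (hl1 : 0 < l1) (hu : 0 < u)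
    (hm : 0 < m) (hsmall : l * u / (2 * m) < 1)
    (g : ℝ → ℝ)
    (hg : g = fun a => a + Real.exp (l * a) / l - 1 / l
      - (u / m) * Real.exp ((l - l1) * a) * (l1 / l)) :
    (∀ a, 0 ≤ a → ∀ d, HasDerivAt g d a → 1 ≤ d) ∧ (∃! a : ℝ, 0 < a ∧ g a = 0) := by
  have hlu : l * u < 2 * m := by
    have h2m : (0:ℝ) < 2 * m := by linarith
    exact (div_lt_one h2m).mp hsmall
  -- the explicit derivative
  set g' : ℝ → ℝ := fun a =>
    1 + Real.exp (l * a) - (u / m) * ((l - l1) * Real.exp ((l - l1) * a)) * (l1 / l) with hg'def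
  have hd : ∀ a : ℝ, HasDerivAt g (g' a) a := by
    intro a
    have h1 : HasDerivAt (fun x : ℝ => Real.exp (l * x)) (Real.exp (l * a) * (l * 1)) a :=
      (Real.hasDerivAt_exp (l * a)).comp a ((hasDerivAt_id a).const_mul l)
    have h2 : HasDerivAt (fun x : ℝ => Real.exp ((l - l1) * x))
        (Real.exp ((l - l1) * a) * ((l - l1) * 1)) a :=
      (Real.hasDerivAt_exp ((l - l1) * a)).comp a ((hasDerivAt_id a).const_mul (l - l1))
    have h3 : HasDerivAt (fun x : ℝ => x + Real.exp (l * x) / l - 1 / l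
        - (u / m) * Real.exp ((l - l1) * x) * (l1 / l))
        (1 + Real.exp (l * a) * (l * 1) / l - 0
          - (u / m) * (Real.exp ((l - l1) * a) * ((l - l1) * 1)) * (l1 / l)) a := by
      exact (((hasDerivAt_id a).add (h1.div_const l)).sub (hasDerivAt_const a (1 / l))).sub
        (((h2.const_mul (u / m)).mul_const (l1 / l)))
    rw [hg]
    convert h3 using 1
    rw [mul_one, mul_one, mul_div_assoc, div_self hl.ne', mul_one]
    ring
  -- key inequality : the derivative is at least 1 for a ≥ 0
  have key : ∀ a : ℝ, 0 ≤ a →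
      (u / m) * ((l - l1) * Real.exp ((l - l1) * a)) * (l1 / l) ≤ Real.exp (l * a) := by
    intro a ha
    rcases le_or_gt l l1 with hle | hlt
    · have hE : (0:ℝ) < Real.exp ((l - l1) * a) := Real.exp_pos _
      have hE2 : (0:ℝ) < Real.exp (l * a) := Real.exp_pos _
      have hcoef : (u / m) * (l1 / l) ≥ 0 := by positivity
      have : (u / m) * ((l - l1) * Real.exp ((l - l1) * a)) * (l1 / l) ≤ 0 := by
        have : (u / m) * ((l - l1) * Real.exp ((l - l1) * a)) * (l1 / l)
            = ((u / m) * (l1 / l)) * ((l - l1) * Real.exp ((l - l1) * a)) := by ring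
        rw [this]
        apply mul_nonpos_of_nonneg_of_nonpos hcoef
        exact mul_nonpos_of_nonpos_of_nonneg (by linarith) hE.le
      linarith
    · -- l1 < l
      have hAM : 4 * ((l - l1) * l1) ≤ l ^ 2 := by nlinarith [sq_nonneg (l - 2 * l1)]
      have hC0 : 0 ≤ (u / m) * (l - l1) * (l1 / l) := by
        have : 0 ≤ l - l1 := by linarith
        positivity
      have hC1 : (u / m) * (l - l1) * (l1 / l) ≤ 1 := by
        have hrw : (u / m) * (l - l1) * (l1 / l) = (u * ((l - l1) * l1)) / (m * l) := by
          field_simp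
        rw [hrw, div_le_one (by positivity)]
        nlinarith [mul_le_mul_of_nonneg_left hAM hu.le, mul_lt_mul_of_pos_right hlu hl]
      have hE : Real.exp ((l - l1) * a) ≤ Real.exp (l * a) := by
        apply Real.exp_le_exp.mpr
        nlinarith
      have hrw : (u / m) * ((l - l1) * Real.exp ((l - l1) * a)) * (l1 / l)
          = ((u / m) * (l - l1) * (l1 / l)) * Real.exp ((l - l1) * a) := by ring
      rw [hrw]
      calc ((u / m) * (l - l1) * (l1 / l)) * Real.exp ((l - l1) * a)
          ≤ 1 * Real.exp (l * a) :=
            mul_le_mul hC1 hE (Real.exp_pos _).le zero_le_one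
        _ = Real.exp (l * a) := one_mul _
  have hge : ∀ a : ℝ, 0 ≤ a → 1 ≤ g' a := by
    intro a ha
    have := key a ha
    simp only [hg'def]
    linarith
  constructor
  · intro a ha d hdv
    have : d = g' a := hdv.unique (hd a)
    rw [this]; exact hge a ha
  · -- growth bound from the derivative bound
    have hcont : ContinuousOn g (Set.Ici 0) := by
      intro x _; exact (hd x).continuousAt.continuousWithinAt
    have hgrow : ∀ x ∈ Set.Ici (0:ℝ), ∀ y ∈ Set.Ici (0:ℝ), x ≤ y →
        1 * (y - x) ≤ g y - g x := by
      apply Convex.mul_sub_le_image_sub_of_le_deriv (convex_Ici 0) hcont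
      · intro x hx
        exact (hd x).differentiableAt.differentiableWithinAt
      · intro x hx
        rw [interior_Ici] at hx
        rw [(hd x).deriv]
        exact hge x (le_of_lt hx)
    have hg0 : g 0 = -((u / m) * (l1 / l)) := by
      rw [hg]; simp
    have hg0neg : g 0 < 0 := by
      rw [hg0]
      have : (0:ℝ) < (u / m) * (l1 / l) := by positivity
      linarith
    set A : ℝ := (u / m) * (l1 / l) + 1 with hA
    have hApos : 0 < A := by
      rw [hA]
      positivity
    have hgA : 1 ≤ g A := by
      have := hgrow 0 Set.self_mem_Ici A (Set.mem_Ici.mpr hApos.le) hApos.le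
      rw [hg0] at this
      linarith
    -- existence via IVT
    have hsub : Set.Ioo (g 0) (g A) ⊆ g '' Set.Ioo 0 A :=
      intermediate_value_Ioo hApos.le (hcont.mono (Set.Icc_subset_Ici_self))
    obtain ⟨x, hx, hgx⟩ := hsub ⟨hg0neg, by linarith⟩
    refine ⟨x, ⟨hx.1, hgx⟩, ?_⟩
    intro y ⟨hy, hgy⟩
    by_contra hne
    rcases lt_or_gt_of_ne hne with h | h
    · have := hgrow y (le_of_lt hy) x (le_of_lt hx.1) h.le
      rw [hgx, hgy] at this
      linarith
    · have := hgrow x (le_of_lt hx.1) y (le_of_lt hy) h.le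
      rw [hgx, hgy] at this
      linarith
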